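/- arXiv:1903.01198 — 2 statements merged into one kernel-verified Lean document; each statement's English description precedes it below -/
import Mathlib

section
/- For all vertices i, j, the expected hitting time satisfies the spectral decomposition H_{ij} = 2|E| · ∑_{k=2}^{n} (1/(1−λ_k)) · ( v_{k,j}²/d_j − v_{k,i} v_{k,j} / √(d_i d_j) ). -/
/-!
Normalizing the eigenvectors, `f k i := v k i / √(d i)` is a right eigenvector of the transition
matrix `P i m = A i m / d i` with eigenvalue `λ k`, and `f 1` is the constant `1 / √(2|E|)`.
Completeness of the orthonormal basis gives `2|E| ∑_{k ≥ 2} f k i f k j = -1` for `i ≠ j`, and with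
this the right-hand side of the formula is seen to satisfy the first-step equations
`H i j = 1 + ∑ m, P i m H m j` (for `i ≠ j`) and `H j j = 0`. These equations have at most one
solution: the difference of two solutions is harmonic off `j`, and by the maximum principle on the
connected graph a harmonic function attains its maximum and its minimum at `j`.
-/

open Finset Matrix

section MaximumPrinciple

variable {ι : Type*} [Fintype ι] {P : Matrix ι ι ℝ} {Γ : SimpleGraph ι}

lemma le_of_harmonic_off (hP_nonneg : ∀ a b, 0 ≤ P a b) (hP_row : ∀ a, ∑ b, P a b = 1)
    (hΓ : Γ.Connected) (hΓP : ∀ a b, Γ.Adj a b → 0 < P a b) {j : ι} {u : ι → ℝ}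
    (hu : ∀ a, a ≠ j → u a = ∑ b, P a b * u b) (i : ι) : u i ≤ u j := by
  have hne : (univ : Finset ι).Nonempty := ⟨j, mem_univ j⟩
  set M := univ.sup' hne u
  have hle : ∀ a, u a ≤ M := fun a => le_sup' u (mem_univ a)
  -- At a maximum `a ≠ j`, `u a` is an average of values `≤ M`, so every neighbour is a maximum.
  have hspread : ∀ a b, a ≠ j → u a = M → Γ.Adj a b → u b = M := by
    intro a b haj haM hab
    have hsum : ∑ c, P a c * (M - u c) = 0 := by
      simp only [mul_sub, sum_sub_distrib, ← sum_mul, hP_row, ← hu a haj, haM]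
      ring
    have hterm := (sum_eq_zero_iff_of_nonneg fun c _ =>
      mul_nonneg (hP_nonneg a c) (sub_nonneg.mpr (hle c))).mp hsum b (mem_univ b)
    have := (mul_eq_zero.mp hterm).resolve_left (hΓP a b hab).ne'
    linarith
  have hreach : ∀ a (p : Γ.Walk a j), u a = M → u j = M := by
    intro a p
    induction p with
    | nil => exact id
    | @cons a b c hab p ih =>
      intro haM
      by_cases hac : a = c
      · exact hac ▸ haM
      · exact ih hu hspread (hspread a b hac haM hab)
  obtain ⟨a, -, haM⟩ := exists_mem_eq_sup' hne u
  exact hreach a (hΓ.preconnected a j).some haM.symm ▸ hle i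

lemma eq_of_harmonic_off (hP_nonneg : ∀ a b, 0 ≤ P a b) (hP_row : ∀ a, ∑ b, P a b = 1)
    (hΓ : Γ.Connected) (hΓP : ∀ a b, Γ.Adj a b → 0 < P a b) {j : ι} {u : ι → ℝ}
    (hu : ∀ a, a ≠ j → u a = ∑ b, P a b * u b) (i : ι) : u i = u j := by
  have hneg : ∀ a, a ≠ j → -u a = ∑ b, P a b * -u b := fun a ha => by
    simp only [mul_neg, sum_neg_distrib, hu a ha]
  exact le_antisymm (le_of_harmonic_off hP_nonneg hP_row hΓ hΓP hu i)
    (neg_le_neg_iff.mp (le_of_harmonic_off hP_nonneg hP_row hΓ hΓP hneg i))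

lemma eq_of_first_step (hP_nonneg : ∀ a b, 0 ≤ P a b) (hP_row : ∀ a, ∑ b, P a b = 1)
    (hΓ : Γ.Connected) (hΓP : ∀ a b, Γ.Adj a b → 0 < P a b) {j : ι} {g h : ι → ℝ}
    (hj : g j = h j) (hg : ∀ a, a ≠ j → g a = 1 + ∑ b, P a b * g b)
    (hh : ∀ a, a ≠ j → h a = 1 + ∑ b, P a b * h b) : g = h := by
  have hdiff : ∀ a, a ≠ j → (g - h) a = ∑ b, P a b * (g - h) b := fun a ha => by
    simp only [Pi.sub_apply, mul_sub, sum_sub_distrib, hg a ha, hh a ha]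
    ring
  funext i
  have := eq_of_harmonic_off hP_nonneg hP_row hΓ hΓP hdiff i
  simp only [Pi.sub_apply, hj, sub_self] at this
  linarith

end MaximumPrinciple

section Spectral

variable {ι κ : Type*} [Fintype ι]

lemma sum_mul_eq_ite_of_orthonormal [DecidableEq ι] {v : ι → ι → ℝ}
    (hv : ∀ k l, ∑ x, v k x * v l x = if k = l then 1 else 0) (i j : ι) :
    ∑ k, v k i * v k j = if i = j then 1 else 0 := by
  have hrows : Matrix.of v * (Matrix.of v)ᵀ = 1 := by
    ext k l
    simpa [Matrix.mul_apply, Matrix.one_apply] using hv k l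
  have hcols : (Matrix.of v)ᵀ * Matrix.of v = 1 := mul_eq_one_comm.mp hrows
  simpa [Matrix.mul_apply, Matrix.one_apply, mul_comm] using congrFun (congrFun hcols i) j

lemma sum_erase_mul_eq_neg_of_orthonormal [DecidableEq ι] {v : ι → ι → ℝ}
    (hv : ∀ k l, ∑ x, v k x * v l x = if k = l then 1 else 0) (k₀ : ι) {i j : ι} (hij : i ≠ j) :
    ∑ k ∈ univ.erase k₀, v k i * v k j = -(v k₀ i * v k₀ j) := by
  have := add_sum_erase univ (fun k => v k i * v k j) (mem_univ k₀)
  rw [sum_mul_eq_ite_of_orthonormal hv, if_neg hij] at this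
  linarith

lemma mul_sum_erase_div_sqrt_mul_div_sqrt_eq_neg_one [DecidableEq ι] {v : ι → ι → ℝ}
    (hv : ∀ k l, ∑ x, v k x * v l x = if k = l then 1 else 0) {d : ι → ℝ} (hdpos : ∀ i, 0 < d i)
    {c : ℝ} (hc : 0 < c) {k₀ : ι} (hv₀ : ∀ i, v k₀ i = √(d i / c)) {i j : ι} (hij : i ≠ j) :
    c * ∑ k ∈ univ.erase k₀, v k i / √(d i) * (v k j / √(d j)) = -1 := by
  have hv₀_div : ∀ i, v k₀ i / √(d i) = (√c)⁻¹ := fun i => by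
    have : √(d i) ≠ 0 := (Real.sqrt_pos.mpr (hdpos i)).ne'
    rw [hv₀, Real.sqrt_div (hdpos i).le]
    field_simp
  calc c * ∑ k ∈ univ.erase k₀, v k i / √(d i) * (v k j / √(d j))
      = c * ((∑ k ∈ univ.erase k₀, v k i * v k j) / (√(d i) * √(d j))) := by
        simp only [div_mul_div_comm, sum_div]
    _ = -(c * (v k₀ i / √(d i) * (v k₀ j / √(d j)))) := by
        rw [sum_erase_mul_eq_neg_of_orthonormal hv k₀ hij]
        ring
    _ = -1 := by
        rw [hv₀_div, hv₀_div, ← mul_inv, Real.mul_self_sqrt hc.le, mul_inv_cancel₀ hc.ne']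

lemma sum_div_mul_div_sqrt_eq_of_mulVec_eq {A B : Matrix ι ι ℝ} {d : ι → ℝ}
    (hdpos : ∀ i, 0 < d i) (hB : ∀ i j, B i j = A i j / (√(d i) * √(d j))) {x : ι → ℝ} {μ : ℝ}
    (hx : B *ᵥ x = μ • x) (i : ι) :
    ∑ m, A i m / d i * (x m / √(d m)) = μ * (x i / √(d i)) := by
  have hdi : d i ≠ 0 := (hdpos i).ne'
  have hterm : ∀ m, A i m / d i * (x m / √(d m)) = B i m * x m / √(d i) := fun m => by
    rw [hB]
    field_simp
    rw [Real.sq_sqrt (hdpos i).le]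
    field_simp
  have := congrFun hx i
  simp only [mulVec, dotProduct, Pi.smul_apply, smul_eq_mul] at this
  rw [sum_congr rfl fun m _ => hterm m, ← sum_div, this, mul_div_assoc]

lemma sum_mul_spectral_sum_eq {P : Matrix ι ι ℝ} (hP_row : ∀ a, ∑ b, P a b = 1)
    {S : Finset κ} {μ : κ → ℝ} {f : κ → ι → ℝ} {c : ℝ}
    (hf : ∀ k i, ∑ m, P i m * f k m = μ k * f k i) (hμ : ∀ k ∈ S, μ k ≠ 1) {i j : ι}
    (hc : c * ∑ k ∈ S, f k i * f k j = -1) :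
    ∑ m, P i m * (c * ∑ k ∈ S, 1 / (1 - μ k) * (f k j ^ 2 - f k m * f k j)) =
      c * ∑ k ∈ S, 1 / (1 - μ k) * (f k j ^ 2 - f k i * f k j) - 1 := by
  have hterm : ∀ k ∈ S, ∑ m, P i m * (1 / (1 - μ k) * (f k j ^ 2 - f k m * f k j)) =
      1 / (1 - μ k) * (f k j ^ 2 - f k i * f k j) + f k i * f k j := fun k hk => by
    have hk : 1 - μ k ≠ 0 := sub_ne_zero.mpr (hμ k hk).symm
    have hsplit : ∑ m, P i m * (1 / (1 - μ k) * (f k j ^ 2 - f k m * f k j)) =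
        1 / (1 - μ k) * (f k j ^ 2 * ∑ m, P i m - f k j * ∑ m, P i m * f k m) := by
      simp only [mul_sum, ← sum_sub_distrib]
      exact sum_congr rfl fun m _ => by ring
    rw [hsplit, hP_row, hf]
    field_simp
    ring
  calc ∑ m, P i m * (c * ∑ k ∈ S, 1 / (1 - μ k) * (f k j ^ 2 - f k m * f k j))
      = c * ∑ k ∈ S, ∑ m, P i m * (1 / (1 - μ k) * (f k j ^ 2 - f k m * f k j)) := by
        simp only [mul_sum]
        rw [sum_comm]
        exact sum_congr rfl fun k _ => sum_congr rfl fun m _ => by ring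
    _ = c * ∑ k ∈ S, 1 / (1 - μ k) * (f k j ^ 2 - f k i * f k j) - 1 := by
        rw [sum_congr rfl hterm, sum_add_distrib, mul_add, hc]
        ring

end Spectral

/-- For all vertices `i, j`, the expected hitting time satisfies the
spectral decomposition
`H i j = 2|E| · ∑_{k=2}^{n} (1/(1−λ_k)) · ( v_{k,j}²/d_j − v_{k,i} v_{k,j} / √(d_i d_j) )`.
The hitting times are characterized by the first-step equations `H j j = 0` and
`H i j = 1 + ∑ k, P i k * H k j` for `i ≠ j`, where `P i k = A i k / d i`. -/
theorem stmt_1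
    (n : ℕ) (hn : 2 ≤ n)
    (A : Matrix (Fin n) (Fin n) ℝ)
    (hsym : ∀ i j, A i j = A j i)
    (hnonneg : ∀ i j, 0 ≤ A i j)
    (d : Fin n → ℝ) (hd : ∀ i, d i = ∑ j, A i j)
    (hdpos : ∀ i, 0 < d i)
    (twoE : ℝ) (htwoE : twoE = ∑ i, d i)
    (B : Matrix (Fin n) (Fin n) ℝ)
    (hB : ∀ i j, B i j = A i j / (Real.sqrt (d i) * Real.sqrt (d j)))
    (lam : Fin n → ℝ) (v : Fin n → Fin n → ℝ)
    (hmono : Antitone lam)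
    (heig : ∀ k, B.mulVec (v k) = lam k • v k)
    (horth : ∀ k l, (∑ x, v k x * v l x) = (if k = l then (1 : ℝ) else 0))
    (hv1 : ∀ j, v ⟨0, by omega⟩ j = Real.sqrt (d j / twoE))
    (hgap : lam ⟨1, by omega⟩ < 1)
    (hconn : (SimpleGraph.fromRel fun i j : Fin n => 0 < A i j).Connected)
    (H : Fin n → Fin n → ℝ)
    (hH0 : ∀ j, H j j = 0)
    (hHrec : ∀ i j, i ≠ j → H i j = 1 + ∑ k, (A i k / d i) * H k j) :
    ∀ i j, H i j = twoE * ∑ k ∈ Finset.univ.filter (fun k : Fin n => k.val ≠ 0),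
      (1 / (1 - lam k)) * ((v k j) ^ 2 / d j - v k i * v k j / Real.sqrt (d i * d j)) := by
  set k₀ : Fin n := ⟨0, by omega⟩
  set f : Fin n → Fin n → ℝ := fun k i => v k i / √(d i)
  have hrow : ∀ i, ∑ k, A i k / d i = 1 := fun i => by
    rw [← sum_div, ← hd, div_self (hdpos i).ne']
  have hadj : ∀ a b, (SimpleGraph.fromRel fun i j : Fin n => 0 < A i j).Adj a b →
      0 < A a b / d a := fun a b hab => by
    rw [SimpleGraph.fromRel_adj, hsym b a, or_self] at hab
    exact div_pos hab.2 (hdpos a)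
  have hf : ∀ k a, ∑ m, A a m / d a * f k m = lam k * f k a := fun k a =>
    sum_div_mul_div_sqrt_eq_of_mulVec_eq hdpos hB (heig k) a
  have hS : univ.filter (fun k : Fin n => k.val ≠ 0) = univ.erase k₀ := by
    ext k; simp [k₀, Fin.ext_iff]
  have hlam : ∀ k ∈ univ.erase k₀, lam k ≠ 1 := fun k hk =>
    (lt_of_le_of_lt (hmono (Fin.mk_le_of_le_val (Nat.one_le_iff_ne_zero.mpr
      (Fin.val_ne_iff.mpr (ne_of_mem_erase hk))))) hgap).ne
  have hcompl : ∀ i j, i ≠ j → twoE * ∑ k ∈ univ.erase k₀, f k i * f k j = -1 :=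
    fun i j hij => mul_sum_erase_div_sqrt_mul_div_sqrt_eq_neg_one horth hdpos
      (htwoE ▸ sum_pos (fun i _ => hdpos i) ⟨k₀, mem_univ _⟩) hv1 hij
  intro i j
  have hsummand : ∀ k, v k j ^ 2 / d j - v k i * v k j / √(d i * d j) =
      f k j ^ 2 - f k i * f k j := fun k => by
    simp only [f, div_pow, Real.sq_sqrt (hdpos j).le, Real.sqrt_mul (hdpos i).le,
      div_mul_div_comm]
  simp only [hsummand, hS]
  refine congrFun (eq_of_first_step (P := fun a b => A a b / d a)
    (fun a b => div_nonneg (hnonneg a b) (hdpos a).le) hrow hconn hadj (j := j)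
    (g := fun a => H a j)
    (h := fun a => twoE * ∑ k ∈ univ.erase k₀, 1 / (1 - lam k) * (f k j ^ 2 - f k a * f k j))
    ?_ (fun a ha => hHrec a j ha) fun a ha => ?_) i
  · simp only [hH0, ← sq, sub_self, mul_zero, sum_const_zero]
  · rw [sum_mul_spectral_sum_eq hrow hf hlam (hcompl a j ha)]
    ring
end

section
/- Fix d ≥ 2 and suppose p_n · n^{d−1} / (log n)⁴ → ∞. Then asymptotically almost surely, simultaneously for all vertices j, 2|Ẽ|/d_j = n(1 + o(1)); i.e., for every ε > 0, the probability that the hypergraph is connected and max_j |2|Ẽ|/d_j − n| ≤ ε n tends to 1 as n → ∞. -/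
open MeasureTheory Filter

/-- The set of potential hyperedges of a `d`-uniform hypergraph on `Fin n`:
`d`-element subsets of the vertex set. -/
abbrev HEdge (n d : ℕ) := {s : Finset (Fin n) // s.card = d}

/-- The weighted adjacency matrix (edge multiplicities) of the multigraph associated
with the hypergraph configuration `ω`: for `i ≠ j`, the number of hyperedges present
in `ω` containing both `i` and `j`; `0` on the diagonal. -/
noncomputable def adjCount (n d : ℕ) (ω : HEdge n d → Bool) (i j : Fin n) : ℝ :=
  if i = j then 0
  else ((Finset.univ.filter fun s : HEdge n d => ω s = true ∧ i ∈ s.1 ∧ j ∈ s.1).card : ℝ)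

/-- The degree of the vertex `j` in the multigraph associated with `ω`. -/
noncomputable def deg (n d : ℕ) (ω : HEdge n d → Bool) (j : Fin n) : ℝ :=
  ∑ i, adjCount n d ω j i

/-- Twice the number of multigraph edges: `2|Ẽ| = ∑_j d_j`. -/
noncomputable def twoEdges (n d : ℕ) (ω : HEdge n d → Bool) : ℝ :=
  ∑ j, deg n d ω j

/-- Connectedness of the (multi)graph associated with the hypergraph configuration `ω`. -/
def HConn (n d : ℕ) (ω : HEdge n d → Bool) : Prop :=
  (SimpleGraph.fromRel fun i j : Fin n => 0 < adjCount n d ω i j).Connected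

/-- The normalized adjacency matrix `B = (a_{ij}/√(d_i d_j))`. -/
noncomputable def Bmat (n d : ℕ) (ω : HEdge n d → Bool) : Matrix (Fin n) (Fin n) ℝ :=
  Matrix.of fun i j =>
    adjCount n d ω i j / (Real.sqrt (deg n d ω i) * Real.sqrt (deg n d ω j))

/-- The law of the random `d`-uniform hypergraph `H(n, p)`: each of the `C(n,d)`
potential hyperedges is present independently with probability `p`. -/
noncomputable def hyperMeasure (n d : ℕ) (p : ℝ) (hp : p ≤ 1) :
    Measure (HEdge n d → Bool) :=
  Measure.pi fun _ =>
    (PMF.bernoulli (Real.toNNReal p) (Real.toNNReal_le_one.mpr hp)).toMeasure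

/-!
The degree of `j` in the multigraph is `(d - 1) X_j`, where the hyperdegree `X_j` is binomial
with `N = C(n - 1, d - 1)` trials, so `2|Ẽ| / d_j = (∑ X_i) / X_j`. Since `p N ≫ log n`, a
multiplicative Chernoff bound `P(|X_j - p N| ≥ δ p N) ≤ 2 exp(-δ² p N / 5)` and a union bound over
the `n` vertices put every `X_j` within a factor `1 ± δ` of the common mean `p N`, and then the
ratio is `n (1 + O(δ))`.

If the hypergraph is disconnected, some vertex set `S` with `2|S| ≤ n` is crossed by no present
hyperedge, while at least `|S| C(n - n/2, d - 1)` potential hyperedges cross it. Summing over `S`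
bounds the probability of disconnection by `∑_{S ≠ ∅} r^|S| ≤ exp(n r) - 1`, where
`r = exp(-p C(n - n/2, d - 1)) ≤ n⁻²`.
-/

open Finset

section BernoulliProduct

variable {ι : Type*} [Fintype ι] {ν : Measure Bool} [IsProbabilityMeasure ν] {p : ℝ}

lemma pi_cylinder (hν : ∀ b, ν {b} = ENNReal.ofReal (if b then p else 1 - p))
    (S : Finset ι) (b : ι → Bool) :
    Measure.pi (fun _ : ι => ν) {ω | ∀ e ∈ S, ω e = b e}
      = ∏ e ∈ S, ENNReal.ofReal (if b e then p else 1 - p) := by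
  classical
  have hset : {ω : ι → Bool | ∀ e ∈ S, ω e = b e}
      = Set.univ.pi fun e => if e ∈ S then {b e} else Set.univ := by
    ext ω
    simp only [Set.mem_ofPred_eq, Set.mem_pi, Set.mem_univ, forall_const]
    refine forall_congr' fun e => ?_
    split_ifs with he <;> simp [he]
  rw [hset, Measure.pi_pi,
    ← prod_subset (subset_univ S) fun e _ he => by rw [if_neg he, measure_univ]]
  exact prod_congr rfl fun e he => by rw [if_pos he, hν]

lemma pi_pattern [DecidableEq ι] (hν : ∀ b, ν {b} = ENNReal.ofReal (if b then p else 1 - p))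
    (hp0 : 0 ≤ p) (hp1 : p ≤ 1) {S T : Finset ι} (hT : T ⊆ S) :
    Measure.pi (fun _ : ι => ν) {ω | ∀ e ∈ S, ω e = decide (e ∈ T)}
      = ENNReal.ofReal (p ^ #T * (1 - p) ^ (#S - #T)) := by
  have hout : ∀ e ∈ S \ T, ENNReal.ofReal (if decide (e ∈ T) then p else 1 - p)
      = ENNReal.ofReal (1 - p) := fun e he => by simp [(mem_sdiff.mp he).2]
  have hin : ∀ e ∈ T, ENNReal.ofReal (if decide (e ∈ T) then p else 1 - p)
      = ENNReal.ofReal p := fun e he => by simp [he]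
  rw [pi_cylinder hν, ← prod_sdiff hT, ← card_sdiff_of_subset hT, prod_congr rfl hout,
    prod_congr rfl hin, prod_const, prod_const, ← ENNReal.ofReal_pow (by linarith),
    ← ENNReal.ofReal_pow hp0, ← ENNReal.ofReal_mul (by positivity), mul_comm]

lemma pi_filter_le (hν : ∀ b, ν {b} = ENNReal.ofReal (if b then p else 1 - p))
    (hp0 : 0 ≤ p) (hp1 : p ≤ 1) (S : Finset ι) (Q : Finset ι → Prop) [DecidablePred Q] :
    Measure.pi (fun _ : ι => ν) {ω | Q {e ∈ S | ω e}}
      ≤ ENNReal.ofReal (∑ T ∈ S.powerset with Q T, p ^ #T * (1 - p) ^ (#S - #T)) := by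
  classical
  have hcover : {ω : ι → Bool | Q {e ∈ S | ω e}}
      ⊆ ⋃ T ∈ {T ∈ S.powerset | Q T}, {ω | ∀ e ∈ S, ω e = decide (e ∈ T)} := by
    intro ω hω
    refine Set.mem_biUnion (x := {e ∈ S | ω e}) (by simpa using hω) fun e he => ?_
    simp [he]
  rw [ENNReal.ofReal_sum_of_nonneg fun T hT => by
    have := card_le_card (mem_powerset.mp (mem_filter.mp hT).1); positivity]
  refine (measure_mono hcover).trans ((measure_biUnion_finset_le _ _).trans_eq ?_)
  exact sum_congr rfl fun T hT => pi_pattern hν hp0 hp1 (mem_powerset.mp (mem_filter.mp hT).1)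

/-- Markov's inequality for `lam ^ X` with `X = #{e ∈ S | ω e}`, using
`E[lam ^ X] = (1 - p + lam p) ^ #S`. -/
lemma pi_one_le_rpow_card_le (hν : ∀ b, ν {b} = ENNReal.ofReal (if b then p else 1 - p))
    (hp0 : 0 ≤ p) (hp1 : p ≤ 1) (S : Finset ι) {lam : ℝ} (hlam : 0 < lam) (θ : ℝ) :
    Measure.pi (fun _ : ι => ν) {ω | 1 ≤ lam ^ ((#{e ∈ S | ω e} : ℝ) - θ)}
      ≤ ENNReal.ofReal (lam ^ (-θ) * Real.exp (#S * p * (lam - 1))) := by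
  classical
  refine (pi_filter_le hν hp0 hp1 S fun T => 1 ≤ lam ^ ((#T : ℝ) - θ)).trans
    (ENNReal.ofReal_le_ofReal ?_)
  have hterm : ∀ T ∈ S.powerset, 0 ≤ p ^ #T * (1 - p) ^ (#S - #T) := fun T _ => by
    have : 0 ≤ 1 - p := by linarith
    positivity
  calc ∑ T ∈ S.powerset with 1 ≤ lam ^ ((#T : ℝ) - θ), p ^ #T * (1 - p) ^ (#S - #T)
      ≤ ∑ T ∈ S.powerset, lam ^ ((#T : ℝ) - θ) * (p ^ #T * (1 - p) ^ (#S - #T)) := by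
        rw [sum_filter]
        refine sum_le_sum fun T hT => ?_
        split_ifs with hQ
        · exact le_mul_of_one_le_left (hterm T hT) hQ
        · exact mul_nonneg (Real.rpow_nonneg hlam.le _) (hterm T hT)
    _ = lam ^ (-θ) * (lam * p + (1 - p)) ^ #S := by
        rw [← sum_pow_mul_eq_add_pow, mul_sum]
        refine sum_congr rfl fun T _ => ?_
        rw [sub_eq_add_neg, Real.rpow_add hlam, Real.rpow_natCast, mul_pow]
        ring
    _ ≤ lam ^ (-θ) * Real.exp (p * (lam - 1)) ^ #S := by
        refine mul_le_mul_of_nonneg_left (pow_le_pow_left₀ (by nlinarith) ?_ _)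
          (Real.rpow_nonneg hlam.le _)
        linarith [Real.add_one_le_exp (p * (lam - 1))]
    _ = lam ^ (-θ) * Real.exp (#S * p * (lam - 1)) := by
        rw [← Real.exp_nat_mul, mul_assoc]

/-- With `lam = 1 + t` and threshold `(1 + 2t) m` in `pi_one_le_rpow_card_le`, this is the
multiplicative Chernoff bound for a deviation `2|t| m`; it only needs `log (1 + t) ≥ t / (1 + t)`. -/
lemma chernoff_exponent_le {t m : ℝ} (ht : |t| ≤ 1 / 4) (hm : 0 ≤ m) :
    (1 + t) ^ (-((1 + 2 * t) * m)) * Real.exp (m * t) ≤ Real.exp (-(4 * t ^ 2 * m / 5)) := by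
  obtain ⟨ht₁, ht₂⟩ := abs_le.mp ht
  have hpos : 0 < 1 + t := by linarith
  rw [Real.rpow_def_of_pos hpos, ← Real.exp_add, Real.exp_le_exp]
  have hlog : t ≤ Real.log (1 + t) * (1 + t) := by
    have h := mul_le_mul_of_nonneg_right (Real.one_sub_inv_le_log_of_pos hpos) hpos.le
    rw [sub_mul, inv_mul_cancel₀ hpos.ne', one_mul] at h
    linarith
  have hw : 0 ≤ (1 + 2 * t) * m := mul_nonneg (by linarith) hm
  nlinarith [mul_le_mul_of_nonneg_left hlog hw, mul_nonneg (sq_nonneg t) hm,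
    mul_nonneg (mul_nonneg (sq_nonneg t) hm) (by linarith : (0:ℝ) ≤ 1 - 4 * t)]

lemma pi_abs_card_sub_ge_le (hν : ∀ b, ν {b} = ENNReal.ofReal (if b then p else 1 - p))
    (hp0 : 0 ≤ p) (hp1 : p ≤ 1) (S : Finset ι) {δ : ℝ} (hδ0 : 0 < δ) (hδ : δ ≤ 1 / 2) :
    Measure.pi (fun _ : ι => ν) {ω | δ * (#S * p) ≤ |(#{e ∈ S | ω e} : ℝ) - #S * p|}
      ≤ ENNReal.ofReal (2 * Real.exp (-(δ ^ 2 * (#S * p) / 5))) := by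
  set m : ℝ := #S * p
  have hm : 0 ≤ m := by positivity
  have htail : ∀ t, |t| ≤ 1 / 4 → 4 * t ^ 2 = δ ^ 2 →
      Measure.pi (fun _ : ι => ν) {ω | 1 ≤ (1 + t) ^ ((#{e ∈ S | ω e} : ℝ) - (1 + 2 * t) * m)}
        ≤ ENNReal.ofReal (Real.exp (-(δ ^ 2 * m / 5))) := fun t ht hδt => by
    refine (pi_one_le_rpow_card_le hν hp0 hp1 S (by linarith [neg_abs_le t]) _).trans
      (ENNReal.ofReal_le_ofReal ?_)
    rw [show (#S : ℝ) * p * (1 + t - 1) = m * t by ring, ← hδt]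
    exact chernoff_exponent_le ht hm
  have hcover : {ω : ι → Bool | δ * m ≤ |(#{e ∈ S | ω e} : ℝ) - m|}
      ⊆ {ω | 1 ≤ (1 + δ / 2) ^ ((#{e ∈ S | ω e} : ℝ) - (1 + 2 * (δ / 2)) * m)}
        ∪ {ω | 1 ≤ (1 + -(δ / 2)) ^ ((#{e ∈ S | ω e} : ℝ) - (1 + 2 * -(δ / 2)) * m)} := by
    intro ω hω
    rcases le_abs'.mp (Set.mem_ofPred.mp hω) with hlow | hhigh
    · exact Or.inr (Real.one_le_rpow_of_pos_of_le_one_of_nonpos (by linarith) (by linarith)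
        (by linarith))
    · exact Or.inl (Real.one_le_rpow (by linarith) (by linarith))
  have habs : |δ / 2| ≤ 1 / 4 := by rw [abs_of_pos (by linarith)]; linarith
  calc _ ≤ _ := measure_mono hcover
    _ ≤ _ := measure_union_le _ _
    _ ≤ ENNReal.ofReal (Real.exp (-(δ ^ 2 * m / 5)))
          + ENNReal.ofReal (Real.exp (-(δ ^ 2 * m / 5))) :=
        add_le_add (htail _ habs (by ring)) (htail _ (by rwa [abs_neg]) (by ring))
    _ = ENNReal.ofReal (2 * Real.exp (-(δ ^ 2 * m / 5))) := by
        rw [← ENNReal.ofReal_add (by positivity) (by positivity), two_mul]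

end BernoulliProduct

lemma abs_sum_div_sub_card_le {ι : Type*} [Fintype ι] {x : ι → ℝ} {m δ ε : ℝ} (hδ0 : 0 ≤ δ)
    (hδ : δ ≤ 1 / 3) (hδε : 3 * δ ≤ ε) (hx : ∀ i, |x i - m| < δ * m) (j : ι) :
    |(∑ i, x i) / x j - Fintype.card ι| ≤ ε * (Fintype.card ι : ℝ) := by
  set N : ℝ := (Fintype.card ι : ℝ)
  have hlo : ∀ i, (1 - δ) * m < x i := fun i => by linarith [neg_abs_le (x i - m), hx i]
  have hhi : ∀ i, x i < (1 + δ) * m := fun i => by linarith [le_abs_self (x i - m), hx i]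
  have hm : 0 < m := by nlinarith [abs_nonneg (x j - m), hx j]
  have hxj : 0 < x j := lt_trans (by nlinarith) (hlo j)
  have hN : 0 ≤ N := Nat.cast_nonneg _
  have hsum_lo : N * ((1 - δ) * m) ≤ ∑ i, x i := by
    simpa [N] using sum_le_sum fun i (_ : i ∈ univ) => (hlo i).le
  have hsum_hi : ∑ i, x i ≤ N * ((1 + δ) * m) := by
    simpa [N] using sum_le_sum fun i (_ : i ∈ univ) => (hhi i).le
  rw [abs_le, le_sub_iff_add_le, sub_le_iff_le_add, le_div_iff₀ hxj, div_le_iff₀ hxj]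
  have hNm : 0 ≤ N * m := mul_nonneg hN hm.le
  have hε : 0 ≤ ε := by linarith
  constructor
  · rcases le_total ε 1 with hε1 | hε1
    · have hgap : (1 - ε) * (1 + δ) ≤ 1 - δ := by nlinarith
      calc (-(ε * N) + N) * x j = N * (1 - ε) * x j := by ring
        _ ≤ N * (1 - ε) * ((1 + δ) * m) :=
          mul_le_mul_of_nonneg_left (hhi j).le (mul_nonneg hN (by linarith))
        _ = N * m * ((1 - ε) * (1 + δ)) := by ring
        _ ≤ N * m * (1 - δ) := mul_le_mul_of_nonneg_left hgap hNm
        _ ≤ ∑ i, x i := by linarith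
    · nlinarith [mul_nonneg (mul_nonneg hN hxj.le) (sub_nonneg.mpr hε1)]
  · have hgap : 1 + δ ≤ (1 + ε) * (1 - δ) := by nlinarith
    calc ∑ i, x i ≤ N * m * (1 + δ) := by linarith
      _ ≤ N * m * ((1 + ε) * (1 - δ)) := mul_le_mul_of_nonneg_left hgap hNm
      _ = N * (1 + ε) * ((1 - δ) * m) := by ring
      _ ≤ N * (1 + ε) * x j := mul_le_mul_of_nonneg_left (hlo j).le (by positivity)
      _ = (ε * N + N) * x j := by ring

lemma SimpleGraph.exists_small_closed_of_not_preconnected {V : Type*} [Fintype V]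
    {G : SimpleGraph V} (h : ¬G.Preconnected) :
    ∃ S : Finset V, S.Nonempty ∧ 2 * #S ≤ Fintype.card V ∧ ∀ x y, G.Adj x y → x ∈ S → y ∈ S := by
  classical
  obtain ⟨u, v, huv⟩ : ∃ u v, ¬G.Reachable u v := by
    simpa [SimpleGraph.Preconnected] using h
  set S : Finset V := {w | G.Reachable u w}
  have hS : ∀ x y, G.Adj x y → (x ∈ S ↔ y ∈ S) := fun x y hxy => by
    simp only [S, mem_filter, mem_univ, true_and]
    exact ⟨fun hx => hx.trans hxy.reachable, fun hy => hy.trans hxy.symm.reachable⟩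
  have hcard := card_add_card_compl S
  rcases le_total (2 * #S) (Fintype.card V) with hsmall | hlarge
  · exact ⟨S, ⟨u, by simp [S]⟩, hsmall, fun x y hxy => (hS x y hxy).mp⟩
  · refine ⟨Sᶜ, ⟨v, by simpa [S] using huv⟩, by omega, fun x y hxy => ?_⟩
    simpa only [mem_compl] using (not_congr (hS x y hxy)).mp

lemma tendsto_natCast_mul_exp_neg {a : ℕ → ℝ} (ha : ∀ᶠ n : ℕ in atTop, 2 * Real.log n ≤ a n) :
    Tendsto (fun n : ℕ => n * Real.exp (-a n)) atTop (nhds 0) := by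
  refine squeeze_zero' (Eventually.of_forall fun n => by positivity) ?_
    tendsto_inv_atTop_nhds_zero_nat
  filter_upwards [ha, eventually_ge_atTop 1] with n han hn
  have hn' : (0 : ℝ) < n := by exact_mod_cast hn
  calc (n : ℝ) * Real.exp (-a n) ≤ n * Real.exp (-Real.log (n ^ 2)) := by
        rw [Real.log_pow]
        gcongr
        push_cast
        linarith
    _ = (n : ℝ)⁻¹ := by
        rw [Real.exp_neg, Real.exp_log (by positivity)]
        field_simp

lemma eventually_pow_div_le_choose_sub_half (r : ℕ) :
    ∀ᶠ n : ℕ in atTop, (n : ℝ) ^ r / (r.factorial * 4 ^ r) ≤ (n - n / 2).choose r := by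
  filter_upwards [eventually_ge_atTop (4 * r)] with n hn
  have hquarter : (n : ℝ) / 4 ≤ ((n - n / 2 + 1 - r : ℕ) : ℝ) := by
    rw [div_le_iff₀ (by norm_num)]
    exact_mod_cast (by omega : n ≤ (n - n / 2 + 1 - r) * 4)
  calc (n : ℝ) ^ r / (r.factorial * 4 ^ r) = ((n : ℝ) / 4) ^ r / r.factorial := by
        rw [div_pow, div_div, mul_comm]
    _ ≤ ((n - n / 2 + 1 - r : ℕ) : ℝ) ^ r / r.factorial := by gcongr
    _ ≤ (n - n / 2).choose r := Nat.pow_le_choose r _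

lemma eventually_mul_log_le_mul_choose {d : ℕ} {p : ℕ → ℝ} (hp0 : ∀ n, 0 ≤ p n)
    (hgrowth : Tendsto (fun n => p n * (n : ℝ) ^ (d - 1) / (Real.log n) ^ 4) atTop atTop)
    {C : ℝ} (hC : 0 < C) :
    ∀ᶠ n : ℕ in atTop, C * Real.log n ≤ p n * (n - n / 2).choose (d - 1) := by
  set K : ℝ := (d - 1).factorial * 4 ^ (d - 1)
  have hK : 0 < K := by positivity
  filter_upwards [hgrowth.eventually_ge_atTop (C * K),
    eventually_pow_div_le_choose_sub_half (d - 1), eventually_ge_atTop 3] with n hgrow hchoose hn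
  have hlog : 1 ≤ Real.log n := by
    rw [Real.le_log_iff_exp_le (by positivity)]
    have : (3 : ℝ) ≤ n := by exact_mod_cast hn
    linarith [Real.exp_one_lt_d9]
  have hlog4 : Real.log n ≤ Real.log n ^ 4 := le_self_pow₀ hlog (by norm_num)
  rw [le_div_iff₀ (by positivity)] at hgrow
  calc C * Real.log n ≤ p n * (n : ℝ) ^ (d - 1) / K := by
        rw [le_div_iff₀ hK]
        nlinarith [mul_le_mul_of_nonneg_left hlog4 (mul_pos hC hK).le]
    _ = p n * ((n : ℝ) ^ (d - 1) / K) := by ring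
    _ ≤ p n * (n - n / 2).choose (d - 1) := mul_le_mul_of_nonneg_left hchoose (hp0 n)

lemma tendsto_measure_one_of_compl_le {ι : Type*} {l : Filter ι} {α : ι → Type*}
    [∀ i, MeasurableSpace (α i)] {μ : ∀ i, Measure (α i)} [∀ i, IsProbabilityMeasure (μ i)]
    {s : ∀ i, Set (α i)} {f : ι → ℝ} (hs : ∀ᶠ i in l, μ i (s i)ᶜ ≤ ENNReal.ofReal (f i))
    (hf : Tendsto f l (nhds 0)) :
    Tendsto (fun i => μ i (s i)) l (nhds 1) := by
  have hlow : Tendsto (fun i => 1 - ENNReal.ofReal (f i)) l (nhds 1) := by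
    simpa using ENNReal.Tendsto.sub tendsto_const_nhds (ENNReal.tendsto_ofReal hf) (by simp)
  refine tendsto_of_tendsto_of_tendsto_of_le_of_le' hlow tendsto_const_nhds ?_
    (Eventually.of_forall fun i => prob_le_one)
  filter_upwards [hs] with i hi
  rw [tsub_le_iff_right]
  calc (1 : ENNReal) = μ i Set.univ := measure_univ.symm
    _ ≤ μ i (s i) + μ i (s i)ᶜ := measure_univ_le_add_compl _
    _ ≤ μ i (s i) + ENNReal.ofReal (f i) := by gcongr

section Hypergraph

variable {n d : ℕ}

def incidentEdges (n d : ℕ) (j : Fin n) : Finset (HEdge n d) := {e | j ∈ e.1}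

def hyperDegree (n d : ℕ) (ω : HEdge n d → Bool) (j : Fin n) : ℕ :=
  #{e ∈ incidentEdges n d j | ω e}

def crossingEdges (n d : ℕ) (S : Finset (Fin n)) : Finset (HEdge n d) :=
  {e | (∃ v ∈ e.1, v ∈ S) ∧ ∃ v ∈ e.1, v ∉ S}

lemma card_incidentEdges (hd : 1 ≤ d) (j : Fin n) :
    #(incidentEdges n d j) = (n - 1).choose (d - 1) := by
  have h := card_filter_powersetCard_subset {j} univ d (by simp) (by simpa using hd)
  simp only [singleton_subset_iff, card_singleton, card_univ, Fintype.card_fin] at h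
  rw [← h]
  refine card_bij (fun e _ => e.1) (fun e he => ?_) (fun _ _ _ _ => Subtype.ext) fun s hs => ?_
  · simpa [incidentEdges, mem_powersetCard, e.2] using he
  · rw [mem_filter, mem_powersetCard] at hs
    exact ⟨⟨s, hs.1.2⟩, by simpa [incidentEdges] using hs.2, rfl⟩

lemma deg_eq_mul_hyperDegree (ω : HEdge n d → Bool) (j : Fin n) :
    deg n d ω j = ((d - 1 : ℕ) : ℝ) * hyperDegree n d ω j := by
  classical
  set t : Finset (HEdge n d) := {e ∈ incidentEdges n d j | ω e}
  let r : Fin n → HEdge n d → Prop := fun i e => i ∈ e.1 ∧ i ≠ j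
  have hadj : ∀ i, adjCount n d ω j i = #(t.bipartiteAbove r i) := fun i => by
    unfold adjCount
    split_ifs with hji
    · simp [bipartiteAbove, r, hji]
    · congr 2
      ext e
      simp [t, r, incidentEdges, bipartiteAbove, Ne.symm hji]
      tauto
  have hbelow : ∀ e ∈ t, #(univ.bipartiteBelow r e) = d - 1 := fun e he => by
    have hje : j ∈ e.1 := by simp [t, incidentEdges] at he; exact he.1
    rw [show d - 1 = #(e.1.erase j) by rw [card_erase_of_mem hje, e.2]]
    congr 1
    ext i
    simp [r, and_comm]
  rw [deg, hyperDegree]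
  simp_rw [hadj]
  rw [← Nat.cast_sum, sum_card_bipartiteAbove_eq_sum_card_bipartiteBelow, sum_congr rfl hbelow,
    sum_const, smul_eq_mul, Nat.cast_mul, mul_comm]

lemma twoEdges_div_deg (hd : 2 ≤ d) (ω : HEdge n d → Bool) (j : Fin n) :
    twoEdges n d ω / deg n d ω j
      = (∑ i, (hyperDegree n d ω i : ℝ)) / hyperDegree n d ω j := by
  have hd1 : ((d - 1 : ℕ) : ℝ) ≠ 0 := by norm_cast; omega
  simp_rw [twoEdges, deg_eq_mul_hyperDegree, ← mul_sum, mul_div_mul_left _ _ hd1]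

lemma card_mul_choose_le_card_crossingEdges (hd : 2 ≤ d) (S : Finset (Fin n)) :
    #S * (n - #S).choose (d - 1) ≤ #(crossingEdges n d S) := by
  have hsplit : ∀ x ∈ S ×ˢ Sᶜ.powersetCard (d - 1),
      insert x.1 x.2 ∩ S = {x.1} ∧ insert x.1 x.2 \ S = x.2 := fun x hx => by
    obtain ⟨hv, hA, -⟩ : x.1 ∈ S ∧ x.2 ⊆ Sᶜ ∧ _ := by simpa [mem_powersetCard] using hx
    constructor
    · ext w
      simp only [mem_inter, mem_insert, mem_singleton]
      exact ⟨fun ⟨hw, hwS⟩ => hw.resolve_right fun hwA => mem_compl.mp (hA hwA) hwS,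
        fun hw => ⟨Or.inl hw, hw ▸ hv⟩⟩
    · rw [insert_sdiff_of_mem _ hv,
        sdiff_eq_self_of_disjoint (subset_compl_iff_disjoint_right.mp hA)]
  calc #S * (n - #S).choose (d - 1) = #(S ×ˢ Sᶜ.powersetCard (d - 1)) := by
        rw [card_product, card_powersetCard, card_compl, Fintype.card_fin]
    _ ≤ #((crossingEdges n d S).map (Function.Embedding.subtype _)) := by
        refine card_le_card_of_injOn (fun x => insert x.1 x.2) (fun x hx => ?_)
          fun x hx y hy h => ?_
        · obtain ⟨hv, hA, hcard⟩ : x.1 ∈ S ∧ x.2 ⊆ Sᶜ ∧ #x.2 = d - 1 := by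
            simpa [mem_powersetCard] using hx
          have hvA : x.1 ∉ x.2 := fun h => mem_compl.mp (hA h) hv
          obtain ⟨a, ha⟩ : x.2.Nonempty := card_pos.mp (by omega)
          simp only [coe_map, Function.Embedding.subtype_apply, Set.mem_image, mem_coe]
          refine ⟨⟨insert x.1 x.2, by rw [card_insert_of_notMem hvA]; omega⟩, ?_, rfl⟩
          simp only [crossingEdges, mem_filter, mem_univ, true_and]
          exact ⟨⟨x.1, mem_insert_self _ _, hv⟩, a, mem_insert_of_mem ha, mem_compl.mp (hA ha)⟩
        · have hx' := hsplit x hx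
          have hy' := hsplit y hy
          simp only at h
          rw [h] at hx'
          exact Prod.ext (singleton_injective (hx'.1.symm.trans hy'.1))
            (hx'.2.symm.trans hy'.2)
    _ = #(crossingEdges n d S) := card_map _

lemma exists_crossingEdges_absent (hn : 1 ≤ n) {ω : HEdge n d → Bool} (h : ¬HConn n d ω) :
    ∃ S : Finset (Fin n), S.Nonempty ∧ 2 * #S ≤ n ∧ ∀ e ∈ crossingEdges n d S, ω e = false := by
  have : Nonempty (Fin n) := ⟨⟨0, hn⟩⟩
  obtain ⟨S, hS, hsmall, hclosed⟩ := SimpleGraph.exists_small_closed_of_not_preconnected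
    fun hpre => h ⟨hpre⟩
  refine ⟨S, hS, by simpa using hsmall, fun e he => ?_⟩
  obtain ⟨⟨x, hxe, hxS⟩, y, hye, hyS⟩ : (∃ v ∈ e.1, v ∈ S) ∧ ∃ v ∈ e.1, v ∉ S := by
    simpa [crossingEdges] using he
  refine Bool.eq_false_iff.mpr fun hω => hyS (hclosed x y ?_ hxS)
  have hxy : x ≠ y := fun hxy => hyS (hxy ▸ hxS)
  refine SimpleGraph.fromRel_adj _ x y |>.mpr ⟨hxy, Or.inl ?_⟩
  rw [adjCount, if_neg hxy, Nat.cast_pos, card_pos]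
  exact ⟨e, by simp [hω, hxe, hye]⟩

end Hypergraph

section RandomHypergraph

variable {n d : ℕ} {p : ℝ}

set_option linter.deprecated false in
lemma bernoulli_toMeasure_singleton (hp0 : 0 ≤ p) (hp1 : p ≤ 1) (b : Bool) :
    (PMF.bernoulli (Real.toNNReal p) (Real.toNNReal_le_one.mpr hp1)).toMeasure {b}
      = ENNReal.ofReal (if b then p else 1 - p) := by
  rw [PMF.toMeasure_apply_singleton _ _ (measurableSet_singleton _)]
  cases b
  · rw [PMF.bernoulli_apply, cond_false, if_neg Bool.false_ne_true, ENNReal.coe_sub,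
      ENNReal.coe_one, ENNReal.ofReal_sub _ hp0, ENNReal.ofReal_one]
    rfl
  · rfl

lemma hyperMeasure_not_HConn_le (hd : 2 ≤ d) (hn : 1 ≤ n) (hp0 : 0 ≤ p) (hp1 : p ≤ 1) :
    hyperMeasure n d p hp1 {ω | ¬HConn n d ω}
      ≤ ENNReal.ofReal (Real.exp (n * Real.exp (-(p * (n - n / 2).choose (d - 1)))) - 1) := by
  set r := Real.exp (-(p * (n - n / 2).choose (d - 1)))
  have hr : 0 ≤ r := Real.exp_nonneg _
  set fam : Finset (Finset (Fin n)) := {S | S.Nonempty ∧ 2 * #S ≤ n}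
  have hcover : {ω : HEdge n d → Bool | ¬HConn n d ω}
      ⊆ ⋃ S ∈ fam, {ω | ∀ e ∈ crossingEdges n d S, ω e = false} := fun ω hω => by
    obtain ⟨S, hS, hsmall, habsent⟩ := exists_crossingEdges_absent hn hω
    exact Set.mem_biUnion (by simp [fam, hS, hsmall]) habsent
  have hcut : ∀ S ∈ fam, (1 - p) ^ #(crossingEdges n d S) ≤ r ^ #S := fun S hS => by
    obtain ⟨-, hsmall⟩ : S.Nonempty ∧ 2 * #S ≤ n := by simpa [fam] using hS
    have hchoose := Nat.choose_le_choose (d - 1) (show n - n / 2 ≤ n - #S by omega)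
    calc (1 - p) ^ #(crossingEdges n d S)
        ≤ (1 - p) ^ (#S * (n - n / 2).choose (d - 1)) :=
          pow_le_pow_of_le_one (by linarith) (by linarith)
            ((Nat.mul_le_mul_left _ hchoose).trans (card_mul_choose_le_card_crossingEdges hd S))
      _ ≤ Real.exp (-p) ^ (#S * (n - n / 2).choose (d - 1)) :=
          pow_le_pow_left₀ (by linarith) (Real.one_sub_le_exp_neg p) _
      _ = r ^ #S := by rw [← Real.exp_nat_mul, ← Real.exp_nat_mul]; push_cast; ring_nf
  have hfam : fam ⊆ univ.erase ∅ := fun S hS => by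
    simpa [fam, nonempty_iff_ne_empty] using (mem_filter.mp hS).2.1
  calc hyperMeasure n d p hp1 {ω | ¬HConn n d ω}
      ≤ ∑ S ∈ fam, hyperMeasure n d p hp1 {ω | ∀ e ∈ crossingEdges n d S, ω e = false} :=
        (measure_mono hcover).trans (measure_biUnion_finset_le _ _)
    _ ≤ ∑ S ∈ fam, ENNReal.ofReal (r ^ #S) := sum_le_sum fun S hS => by
        rw [hyperMeasure, pi_cylinder (bernoulli_toMeasure_singleton hp0 hp1)]
        simp only [Bool.false_eq_true, if_false, prod_const]
        rw [← ENNReal.ofReal_pow (by linarith)]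
        exact ENNReal.ofReal_le_ofReal (hcut S hS)
    _ = ENNReal.ofReal (∑ S ∈ fam, r ^ #S) :=
        (ENNReal.ofReal_sum_of_nonneg fun _ _ => by positivity).symm
    _ ≤ ENNReal.ofReal (∑ S ∈ univ.erase ∅, r ^ #S) :=
        ENNReal.ofReal_le_ofReal (sum_le_sum_of_subset_of_nonneg hfam fun _ _ _ => by positivity)
    _ = ENNReal.ofReal ((r + 1) ^ n - 1) := by
        rw [sum_erase_eq_sub (mem_univ _), ← Fin.sum_pow_mul_eq_add_pow]
        simp
    _ ≤ _ := by
        refine ENNReal.ofReal_le_ofReal (sub_le_sub_right ?_ 1)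
        rw [Real.exp_nat_mul]
        exact pow_le_pow_left₀ (by positivity) (by linarith [Real.add_one_le_exp r]) n

lemma hyperMeasure_exists_hyperDegree_far_le (hd : 1 ≤ d) (hp0 : 0 ≤ p) (hp1 : p ≤ 1) {δ : ℝ}
    (hδ0 : 0 < δ) (hδ : δ ≤ 1 / 2) :
    hyperMeasure n d p hp1
        {ω | ∃ j, δ * ((n - 1).choose (d - 1) * p)
          ≤ |(hyperDegree n d ω j : ℝ) - (n - 1).choose (d - 1) * p|}
      ≤ ENNReal.ofReal (2 * (n * Real.exp (-(δ ^ 2 * ((n - 1).choose (d - 1) * p) / 5)))) := by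
  rw [Set.ofPred_exists, mul_left_comm (2 : ℝ), ENNReal.ofReal_mul (Nat.cast_nonneg n),
    ENNReal.ofReal_natCast]
  refine (measure_iUnion_fintype_le _ _).trans ?_
  calc _ ≤ ∑ _j : Fin n,
        ENNReal.ofReal (2 * Real.exp (-(δ ^ 2 * ((n - 1).choose (d - 1) * p) / 5))) :=
        sum_le_sum fun j _ => by
          simpa only [hyperMeasure, hyperDegree, card_incidentEdges hd] using
            pi_abs_card_sub_ge_le (bernoulli_toMeasure_singleton hp0 hp1) hp0 hp1
              (incidentEdges n d j) hδ0 hδ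
    _ = _ := by simp

instance (hp1 : p ≤ 1) : IsProbabilityMeasure (hyperMeasure n d p hp1) := by
  unfold hyperMeasure
  infer_instance

lemma hyperMeasure_compl_balanced_le (hd : 2 ≤ d) (hn : 1 ≤ n) (hp0 : 0 ≤ p) (hp1 : p ≤ 1)
    {ε δ : ℝ} (hδ0 : 0 < δ) (hδ : δ ≤ 1 / 3) (hδε : 3 * δ ≤ ε) :
    hyperMeasure n d p hp1
        {ω | HConn n d ω ∧ ∀ j : Fin n, |twoEdges n d ω / deg n d ω j - n| ≤ ε * n}ᶜ
      ≤ ENNReal.ofReal ((Real.exp (n * Real.exp (-(p * (n - n / 2).choose (d - 1)))) - 1)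
          + 2 * (n * Real.exp (-(δ ^ 2 * ((n - 1).choose (d - 1) * p) / 5)))) := by
  set m : ℝ := (n - 1).choose (d - 1) * p
  have hcover : {ω | HConn n d ω ∧ ∀ j : Fin n, |twoEdges n d ω / deg n d ω j - n| ≤ ε * n}ᶜ
      ⊆ {ω | ¬HConn n d ω} ∪ {ω | ∃ j, δ * m ≤ |(hyperDegree n d ω j : ℝ) - m|} := by
    intro ω hω
    by_contra hgood
    simp only [Set.mem_union, Set.mem_ofPred_eq, not_or, not_not, not_exists, not_le] at hgood
    refine hω ⟨hgood.1, fun j => ?_⟩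
    rw [twoEdges_div_deg hd]
    simpa using abs_sum_div_sub_card_le hδ0.le hδ hδε hgood.2 j
  have hexp : 0 ≤ Real.exp (n * Real.exp (-(p * (n - n / 2).choose (d - 1)))) - 1 := by
    simp only [sub_nonneg, Real.one_le_exp_iff]
    positivity
  calc _ ≤ _ := measure_mono hcover
    _ ≤ _ := measure_union_le _ _
    _ ≤ _ := add_le_add (hyperMeasure_not_HConn_le hd hn hp0 hp1)
        (hyperMeasure_exists_hyperDegree_far_le (by omega) hp0 hp1 hδ0 (by linarith))
    _ = _ := (ENNReal.ofReal_add hexp (by positivity)).symm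

end RandomHypergraph

/-- a.a.s., simultaneously for all vertices j, 2|Ẽ|/d_j = n(1+o(1)): for every ε > 0, the probability that the hypergraph is connected and max_j |2|Ẽ|/d_j − n| ≤ εn tends to 1. -/
theorem stmt_15
    (d : ℕ) (hd : 2 ≤ d)
    (p : ℕ → ℝ) (hp0 : ∀ n, 0 ≤ p n) (hp1 : ∀ n, p n ≤ 1)
    (hgrowth : Tendsto
      (fun n => p n * (n : ℝ) ^ (d - 1) / (Real.log n) ^ 4) atTop atTop) :
    ∀ ε : ℝ, 0 < ε →
    Tendsto (fun n => hyperMeasure n d (p n) (hp1 n)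
      {ω : HEdge n d → Bool | HConn n d ω ∧
        ∀ j : Fin n, |twoEdges n d ω / deg n d ω j - (n : ℝ)| ≤ ε * n})
      atTop (nhds 1) := by
  intro ε hε
  obtain ⟨δ, hδ0, hδ, hδε⟩ : ∃ δ : ℝ, 0 < δ ∧ δ ≤ 1 / 3 ∧ 3 * δ ≤ ε :=
    ⟨min ε 1 / 3, by positivity, by linarith [min_le_right ε 1], by linarith [min_le_left ε 1]⟩
  have hcut := tendsto_natCast_mul_exp_neg (eventually_mul_log_le_mul_choose hp0 hgrowth two_pos)
  have hdeg := tendsto_natCast_mul_exp_neg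
    (a := fun n => δ ^ 2 * ((n - 1).choose (d - 1) * p n) / 5) <| by
    filter_upwards [eventually_mul_log_le_mul_choose hp0 hgrowth (by positivity : 0 < 10 / δ ^ 2),
      eventually_ge_atTop 2] with n hlog hn
    have hchoose : ((n - n / 2).choose (d - 1) : ℝ) ≤ (n - 1).choose (d - 1) := by
      exact_mod_cast Nat.choose_le_choose _ (by omega)
    calc 2 * Real.log n = δ ^ 2 * (10 / δ ^ 2 * Real.log n) / 5 := by field_simp; ring
      _ ≤ δ ^ 2 * ((n - 1).choose (d - 1) * p n) / 5 := by
        gcongr δ ^ 2 * ?_ / 5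
        linarith [mul_le_mul_of_nonneg_right hchoose (hp0 n)]
  refine tendsto_measure_one_of_compl_le ((eventually_ge_atTop 1).mono fun n hn =>
    hyperMeasure_compl_balanced_le hd hn (hp0 n) (hp1 n) hδ0 hδ hδε) ?_
  simpa using (((Real.continuous_exp.tendsto 0).comp hcut).sub_const 1).add (hdeg.const_mul 2)
end
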